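/- The commutator subgroup of W₁ equals the subgroup generated by {z, α₁, α₂, α₃, α₄}, and the center of W₁ equals the subgroup generated by {α^p, α₁, α₂, α₃, α₄}. -/

import Mathlib

/-!
Since `z = [x, y]`, `α₁ = [x, z]`, `α₂ = [y, z]`, `α₃ = [x, α]` and `α₄ = [y, α]`, the group is
generated by `x, y, α`. Conjugation only multiplies `z` by central elements, so
`N = ⟨z, α₁, α₂, α₃, α₄⟩` is normal, and `x, y, α` commute modulo `N`; hence `W₁' = N`.

Adjoining `α₄, α₃, α₂, α₁, α^p, z, α, x, y` one at a time builds `W₁` through a normal series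
whose factors have order at most `p`. As `|W₁| = p⁹`, every factor has order exactly `p`, which
gives the independence we need: `z^m ∈ A := ⟨α^p, α₁, α₂, α₃, α₄⟩` or `α₁^k α₃^l = 1` force
`p ∣ m` resp. `p ∣ k, l`. Modulo the central subgroup `A`, the elements `z` and `α` are central and
`[x, y] = z`, so a central element of `W₁` lies in `⟨z, α⟩A`. Finally, commuting `c z^k α^l`
(with `c ∈ A`) past `x` produces the factor `α₁^k α₃^l`, which must be trivial.
-/

/-- The commutator convention used in the paper: `[a, b] = a⁻¹ * b⁻¹ * a * b`. -/
def pcomm {G : Type*} [Group G] (a b : G) : G := a⁻¹ * b⁻¹ * a * b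

/-- `IsW1 p W x y z α a₁ a₂ a₃ a₄` says that `W` is (a copy of) the finite group `W₁`
of order `p ^ 9` with presentation on generators `x, y, z, α, α₁, α₂, α₃, α₄` and relations
`[x,y] = z`, `[x,z] = α₁`, `[y,z] = α₂`, `[x,α] = α₃`, `[y,α] = α₄`, `[z,α] = 1`,
`x^p = y^p = z^p = α₁^p = α₂^p = α₃^p = α₄^p = 1`, `α^(p²) = 1`, and
`α₁, α₂, α₃, α₄` commute with all generators. -/
def IsW1 (p : ℕ) (W : Type*) [Group W] (x y z α a₁ a₂ a₃ a₄ : W) : Prop :=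
  Subgroup.closure {x, y, z, α, a₁, a₂, a₃, a₄} = ⊤ ∧
  Nat.card W = p ^ 9 ∧
  pcomm x y = z ∧ pcomm x z = a₁ ∧ pcomm y z = a₂ ∧
  pcomm x α = a₃ ∧ pcomm y α = a₄ ∧ pcomm z α = 1 ∧
  x ^ p = 1 ∧ y ^ p = 1 ∧ z ^ p = 1 ∧
  a₁ ^ p = 1 ∧ a₂ ^ p = 1 ∧ a₃ ^ p = 1 ∧ a₄ ^ p = 1 ∧ α ^ p ^ 2 = 1 ∧
  ∀ c ∈ ({a₁, a₂, a₃, a₄} : Set W), ∀ g ∈ ({x, y, z, α, a₁, a₂, a₃, a₄} : Set W),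
    c * g = g * c

open Subgroup
open scoped commutatorElement

section General

variable {G : Type*} [Group G]

theorem mul_eq_mul_mul_pcomm (a b : G) : a * b = b * a * pcomm a b := by
  unfold pcomm; group

theorem pcomm_swap (a b : G) : pcomm b a = (pcomm a b)⁻¹ := by
  unfold pcomm; group

theorem Subgroup.pcomm_mem {H : Subgroup G} {a b : G} (ha : a ∈ H) (hb : b ∈ H) :
    pcomm a b ∈ H :=
  mul_mem (mul_mem (mul_mem (inv_mem ha) (inv_mem hb)) ha) hb

theorem MonoidHom.map_pcomm {H : Type*} [Group H] (f : G →* H) (a b : G) :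
    f (pcomm a b) = pcomm (f a) (f b) := by
  simp [pcomm]

theorem pcomm_mem_commutator (a b : G) : pcomm a b ∈ commutator G := by
  have : pcomm a b = ⁅a⁻¹, b⁻¹⁆ := by unfold pcomm; group
  rw [this, _root_.commutator_def]
  exact commutator_mem_commutator (mem_top _) (mem_top _)

theorem commute_of_pcomm_eq_one {a b : G} (h : pcomm a b = 1) : Commute a b := by
  rw [Commute, SemiconjBy, mul_eq_mul_mul_pcomm a b, h, mul_one]

theorem mul_pow_eq_of_mul_eq {X Y Z : G} (h : X * Y = Y * X * Z) (hYZ : Commute Y Z) (n : ℕ) :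
    X * Y ^ n = Y ^ n * X * Z ^ n := by
  induction n with
  | zero => simp
  | succ n ih =>
    calc X * Y ^ (n + 1) = Y ^ n * X * (Z ^ n * Y) := by rw [pow_succ, ← mul_assoc, ih, mul_assoc]
      _ = Y ^ n * (X * Y) * Z ^ n := by rw [← (hYZ.pow_right n).eq]; simp only [mul_assoc]
      _ = Y ^ (n + 1) * X * Z ^ (n + 1) := by rw [h, pow_succ, pow_succ']; simp only [mul_assoc]

theorem conj_eq_mul_pcomm {a b : G} (h : pcomm a b ∈ center G) : a * b * a⁻¹ = b * pcomm a b := by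
  rw [mul_eq_mul_mul_pcomm a b, mul_assoc b, mem_center_iff.1 h a, mul_assoc, mul_assoc,
    mul_inv_cancel, mul_one]

theorem mem_center_of_forall_commute {S : Set G} (hS : closure S = ⊤) {g : G}
    (h : ∀ s ∈ S, s * g = g * s) : g ∈ center G := by
  rw [← centralizer_univ, ← coe_top, ← hS, centralizer_closure]
  exact mem_centralizer_iff.2 h

theorem MonoidHom.map_mem_center {H : Type*} [Group H] {f : G →* H}
    (hf : Function.Surjective f) {g : G} (hg : g ∈ center G) : f g ∈ center H :=
  mem_center_iff.2 fun h => by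
    obtain ⟨w, rfl⟩ := hf h
    rw [← map_mul, ← map_mul, mem_center_iff.1 hg w]

theorem closure_image_eq_top {H : Type*} [Group H] {f : G →* H} (hf : Function.Surjective f)
    {S : Set G} (hS : closure S = ⊤) : closure (f '' S) = ⊤ := by
  rw [← MonoidHom.map_closure, hS, map_top_of_surjective f hf]

theorem Subgroup.normal_of_le_center {H : Subgroup G} (h : H ≤ center G) : H.Normal :=
  ⟨fun n hn g => by rwa [mem_center_iff.1 (h hn) g, mul_inv_cancel_right]⟩

theorem normal_closure_of_conj_mem [Finite G] {S T : Set G} (hS : closure S = ⊤)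
    (h : ∀ s ∈ S, ∀ t ∈ T, s * t * s⁻¹ ∈ closure T) : (closure T).Normal := by
  rw [← normalizer_eq_top_iff, eq_top_iff, ← hS, closure_le]
  intro s hs
  exact mem_normalizer_fintype fun n hn =>
    (closure_le ((closure T).comap (MulAut.conj s).toMonoidHom)).2 (h s hs) hn

theorem commute_mk_of_pcomm_mem {H : Subgroup G} [H.Normal] {a b : G} (h : pcomm a b ∈ H) :
    Commute (a : G ⧸ H) (b : G ⧸ H) := by
  refine commute_of_pcomm_eq_one ?_
  rwa [← QuotientGroup.mk'_apply, ← QuotientGroup.mk'_apply, ← MonoidHom.map_pcomm,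
    QuotientGroup.mk'_apply, QuotientGroup.eq_one_iff]

theorem pow_eq_one_of_pow_mul_pow_mem_center {X Y Z : G} (h : X * Y = Y * X * Z)
    (hZ : Z ∈ center G) {m n : ℕ} (hc : X ^ m * Y ^ n ∈ center G) : Z ^ m = 1 ∧ Z ^ n = 1 := by
  have hc' (g : G) : Commute g (X ^ m * Y ^ n) := mem_center_iff.1 hc g
  have hc'' (g : G) : Commute g Z := mem_center_iff.1 hZ g
  have hXYn : Commute X (Y ^ n) := by
    simpa using ((Commute.pow_right (Commute.refl X) m).inv_right).mul_right (hc' X)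
  have hXmY : Commute (X ^ m) Y := by
    simpa using (hc' Y).symm.mul_left ((Commute.refl Y).pow_left n).inv_left
  have hYX : Y * X = X * Y * Z⁻¹ := by rw [h, mul_inv_cancel_right]
  have hZm := mul_pow_eq_of_mul_eq hYX (hc'' X).inv_right m
  have hZn := mul_pow_eq_of_mul_eq h (hc'' Y) n
  rw [hXmY.eq, left_eq_mul, inv_pow, inv_eq_one] at hZm
  rw [hXYn.eq, left_eq_mul] at hZn
  exact ⟨hZm, hZn⟩

theorem commutator_le_of_pcomm_mem {S : Set G} (hS : closure S = ⊤) {H : Subgroup G} [H.Normal]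
    (h : ∀ a ∈ S, ∀ b ∈ S, pcomm a b ∈ H) : commutator G ≤ H := by
  rw [← Normal.quotient_commutative_iff_commutator_le]
  have hS' := closure_image_eq_top (QuotientGroup.mk'_surjective H) hS
  have hcenter : center (G ⧸ H) = ⊤ := by
    rw [eq_top_iff, ← hS', closure_le]
    rintro _ ⟨b, hb, rfl⟩
    refine mem_center_of_forall_commute hS' ?_
    rintro _ ⟨a, ha, rfl⟩
    exact (commute_mk_of_pcomm_mem (h a ha b hb)).eq
  exact ⟨⟨fun a b => mem_center_iff.1 (hcenter ▸ mem_top b) a⟩⟩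

end General

theorem List.setOf_mem_cons {α : Type*} (a : α) (l : List α) :
    {b | b ∈ a :: l} = insert a {b | b ∈ l} := by
  ext; simp

section Tower

variable {G : Type*} [Group G]

theorem exists_mul_pow_eq_of_mem_closure_insert [Finite G] {s : Set G} [(closure s).Normal]
    {g u : G} (hu : u ∈ closure (insert g s)) : ∃ h ∈ closure s, ∃ n : ℕ, h * g ^ n = u := by
  rw [Set.insert_eq, Subgroup.closure_union, sup_comm, mem_sup_of_normal_left,
    ← zpowers_eq_closure] at hu
  obtain ⟨h, hh, _, hg, rfl⟩ := hu
  obtain ⟨n, rfl⟩ := mem_powers_iff_mem_zpowers.mpr hg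
  exact ⟨h, hh, n, rfl⟩

theorem card_closure_insert_le [Finite G] {p : ℕ} (hp : 0 < p) {s : Set G} [(closure s).Normal]
    {g : G} (hg : g ^ p ∈ closure s) :
    Nat.card (closure (insert g s)) ≤ p * Nat.card (closure s) := by
  let f : Fin p × closure s → closure (insert g s) := fun ih =>
    ⟨ih.2 * g ^ (ih.1 : ℕ), mul_mem (closure_mono (Set.subset_insert g s) ih.2.2)
      (pow_mem (subset_closure (Set.mem_insert g s)) _)⟩
  have hf : Function.Surjective f := by
    rintro ⟨u, hu⟩
    obtain ⟨h, hh, n, rfl⟩ := exists_mul_pow_eq_of_mem_closure_insert hu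
    refine ⟨(⟨n % p, Nat.mod_lt n hp⟩, ⟨h * (g ^ p) ^ (n / p), mul_mem hh (pow_mem hg _)⟩), ?_⟩
    ext
    simp only [f, mul_assoc, ← pow_mul, ← pow_add, Nat.div_add_mod]
  calc Nat.card (closure (insert g s)) ≤ Nat.card (Fin p × closure s) :=
        Nat.card_le_card_of_surjective f hf
    _ = p * Nat.card (closure s) := by simp

theorem dvd_of_pow_mem_of_notMem {p : ℕ} (hp : p.Prime) {H : Subgroup G} [H.Normal] {g : G}
    (hgp : g ^ p ∈ H) (hg : g ∉ H) {k : ℕ} (hk : g ^ k ∈ H) : p ∣ k := by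
  have hdvd : orderOf (g : G ⧸ H) ∣ p := orderOf_dvd_of_pow_eq_one <| by
    rwa [← QuotientGroup.mk_pow, QuotientGroup.eq_one_iff]
  have hne : orderOf (g : G ⧸ H) ≠ 1 := by
    rwa [Ne, orderOf_eq_one_iff, QuotientGroup.eq_one_iff]
  rw [← (hp.eq_one_or_self_of_dvd _ hdvd).resolve_left hne]
  exact orderOf_dvd_of_pow_eq_one (by rwa [← QuotientGroup.mk_pow, QuotientGroup.eq_one_iff])

/-- Read from the right, the subgroups generated by the tails of `l` form a normal series of
`closure {h | h ∈ l}` whose factors are cyclic of order dividing `p`. -/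
def IsPTower (p : ℕ) : List G → Prop
  | [] => True
  | g :: l => (closure {h | h ∈ l}).Normal ∧ g ^ p ∈ closure {h | h ∈ l} ∧ IsPTower p l

variable [Finite G] {p : ℕ}

theorem IsPTower.card_le (hp : 0 < p) : ∀ {l : List G}, IsPTower p l →
    Nat.card (closure {h | h ∈ l}) ≤ p ^ l.length
  | [], _ => by simp
  | g :: l, ⟨_, hg, hl⟩ => by
    rw [List.setOf_mem_cons, List.length_cons, pow_succ']
    exact (card_closure_insert_le hp hg).trans (Nat.mul_le_mul_left p (hl.card_le hp))

theorem IsPTower.card_tail_and_notMem (hp : p.Prime) {g : G} {l : List G}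
    (ht : IsPTower p (g :: l)) (hcard : Nat.card (closure {h | h ∈ g :: l}) = p ^ (l.length + 1)) :
    Nat.card (closure {h | h ∈ l}) = p ^ l.length ∧ g ∉ closure {h | h ∈ l} := by
  obtain ⟨_, hg, hl⟩ := ht
  have hle := card_closure_insert_le hp.pos hg
  rw [← List.setOf_mem_cons, hcard, pow_succ'] at hle
  have hcard_l : Nat.card (closure {h | h ∈ l}) = p ^ l.length :=
    le_antisymm (hl.card_le hp.pos) (Nat.le_of_mul_le_mul_left hle hp.pos)
  refine ⟨hcard_l, fun hmem => ?_⟩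
  have hsub : closure {h | h ∈ g :: l} ≤ closure {h | h ∈ l} := by
    rw [List.setOf_mem_cons, closure_le]
    exact Set.insert_subset hmem subset_closure
  have := card_le_of_le hsub
  rw [hcard, hcard_l] at this
  exact (Nat.pow_lt_pow_succ hp.one_lt).not_ge this

theorem IsPTower.dvd_of_pow_mem (hp : p.Prime) {g : G} {l : List G} :
    ∀ (l₁ : List G), IsPTower p (l₁ ++ g :: l) →
      Nat.card (closure {h | h ∈ l₁ ++ g :: l}) = p ^ (l₁ ++ g :: l).length →
      ∀ {k : ℕ}, g ^ k ∈ closure {h | h ∈ l} → p ∣ k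
  | [], ht, hcard, _, hk => by
    have := ht.1
    exact dvd_of_pow_mem_of_notMem hp ht.2.1 (ht.card_tail_and_notMem hp hcard).2 hk
  | _ :: l₁, ht, hcard, _, hk =>
    IsPTower.dvd_of_pow_mem hp l₁ ht.2.2 (ht.card_tail_and_notMem hp hcard).1 hk

end Tower

namespace IsW1

variable {p : ℕ} {W : Type*} [Group W] {x y z α a₁ a₂ a₃ a₄ : W}

theorem finite (hW : IsW1 p W x y z α a₁ a₂ a₃ a₄) (hp : p.Prime) : Finite W := by
  obtain ⟨-, hcard, -⟩ := hW
  exact Nat.finite_of_card_ne_zero (by rw [hcard]; exact pow_ne_zero 9 hp.ne_zero)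

theorem subset_center (hW : IsW1 p W x y z α a₁ a₂ a₃ a₄) :
    ({a₁, a₂, a₃, a₄} : Set W) ⊆ center W := by
  obtain ⟨hgen, -, -, -, -, -, -, -, -, -, -, -, -, -, -, -, hcomm⟩ := hW
  exact fun c hc => mem_center_of_forall_commute hgen fun g hg => (hcomm c hc g hg).symm

theorem closure_eq_top (hW : IsW1 p W x y z α a₁ a₂ a₃ a₄) : closure {x, y, α} = ⊤ := by
  obtain ⟨hgen, -, hxy, hxz, hyz, hxα, hyα, -⟩ := hW
  have hx : x ∈ closure {x, y, α} := subset_closure (by simp)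
  have hy : y ∈ closure {x, y, α} := subset_closure (by simp)
  have hα : α ∈ closure {x, y, α} := subset_closure (by simp)
  have hz : z ∈ closure {x, y, α} := hxy ▸ pcomm_mem hx hy
  rw [eq_top_iff, ← hgen, closure_le]
  rintro _ (rfl | rfl | rfl | rfl | rfl | rfl | rfl | rfl)
  exacts [hx, hy, hz, hα, hxz ▸ pcomm_mem hx hz, hyz ▸ pcomm_mem hy hz, hxα ▸ pcomm_mem hx hα,
    hyα ▸ pcomm_mem hy hα]

theorem α_pow_mem_center (hW : IsW1 p W x y z α a₁ a₂ a₃ a₄) : α ^ p ∈ center W := by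
  have hgen := hW.closure_eq_top
  have h₃ := hW.subset_center (by simp : a₃ ∈ _)
  have h₄ := hW.subset_center (by simp : a₄ ∈ _)
  obtain ⟨-, -, -, -, -, hxα, hyα, -, -, -, -, -, -, hp₃, hp₄, -⟩ := hW
  refine mem_center_of_forall_commute hgen ?_
  rintro _ (rfl | rfl | rfl)
  · rw [mul_pow_eq_of_mul_eq (hxα ▸ mul_eq_mul_mul_pcomm _ α) (mem_center_iff.1 h₃ α), hp₃,
      mul_one]
  · rw [mul_pow_eq_of_mul_eq (hyα ▸ mul_eq_mul_mul_pcomm _ α) (mem_center_iff.1 h₄ α), hp₄,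
      mul_one]
  · exact (Commute.self_pow _ p).eq

theorem closure_normal (hW : IsW1 p W x y z α a₁ a₂ a₃ a₄) (hp : p.Prime) :
    (closure {z, a₁, a₂, a₃, a₄}).Normal := by
  have := hW.finite hp
  have hgen := hW.closure_eq_top
  have hcent := hW.subset_center
  obtain ⟨-, -, -, hxz, hyz, -, -, hzα, -⟩ := hW
  have hmem {c : W} (hc : c ∈ ({z, a₁, a₂, a₃, a₄} : Set W)) : c ∈ closure {z, a₁, a₂, a₃, a₄} :=
    subset_closure hc
  refine normal_closure_of_conj_mem hgen ?_
  rintro s hs t (rfl | ht)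
  · rcases hs with rfl | rfl | rfl
    · rw [conj_eq_mul_pcomm (hxz ▸ hcent (by simp)), hxz]
      exact mul_mem (hmem (by simp)) (hmem (by simp))
    · rw [conj_eq_mul_pcomm (hyz ▸ hcent (by simp)), hyz]
      exact mul_mem (hmem (by simp)) (hmem (by simp))
    · exact (commute_of_pcomm_eq_one hzα).symm.mul_inv_cancel.symm ▸ hmem (by simp)
  · exact (Commute.mul_inv_cancel (mem_center_iff.1 (hcent ht) s)).symm ▸ hmem (.inr ht)

theorem commutator_eq (hW : IsW1 p W x y z α a₁ a₂ a₃ a₄) (hp : p.Prime) :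
    commutator W = closure {z, a₁, a₂, a₃, a₄} := by
  have := hW.closure_normal hp
  have hgen := hW.closure_eq_top
  obtain ⟨-, -, hxy, hxz, hyz, hxα, hyα, -⟩ := hW
  set N := closure {z, a₁, a₂, a₃, a₄}
  have hxy' : pcomm x y ∈ N := hxy ▸ subset_closure (by simp)
  have hxα' : pcomm x α ∈ N := hxα ▸ subset_closure (by simp)
  have hyα' : pcomm y α ∈ N := hyα ▸ subset_closure (by simp)
  have hswap {a b : W} (h : pcomm a b ∈ N) : pcomm b a ∈ N := pcomm_swap a b ▸ inv_mem h
  have hself (a : W) : pcomm a a ∈ N := by simp [pcomm]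
  refine le_antisymm (commutator_le_of_pcomm_mem hgen ?_) (closure_le _ |>.2 ?_)
  · rintro a (rfl | rfl | rfl) b (rfl | rfl | rfl)
    exacts [hself _, hxy', hxα', hswap hxy', hself _, hyα', hswap hxα', hswap hyα', hself _]
  · rintro _ (rfl | rfl | rfl | rfl | rfl)
    exacts [hxy ▸ pcomm_mem_commutator x y, hxz ▸ pcomm_mem_commutator x _,
      hyz ▸ pcomm_mem_commutator y _, hxα ▸ pcomm_mem_commutator x α,
      hyα ▸ pcomm_mem_commutator y α]

theorem closure_le_center (hW : IsW1 p W x y z α a₁ a₂ a₃ a₄) :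
    closure {α ^ p, a₁, a₂, a₃, a₄} ≤ center W := by
  rw [closure_le]
  rintro _ (rfl | hc)
  exacts [hW.α_pow_mem_center, hW.subset_center hc]

theorem closure_normal_of_supset (hW : IsW1 p W x y z α a₁ a₂ a₃ a₄) (hp : p.Prime) {T : Set W}
    (hT : {z, a₁, a₂, a₃, a₄} ⊆ T) : (closure T).Normal :=
  Normal.of_commutator_le W ((hW.commutator_eq hp).trans_le (closure_mono hT))

theorem isPTower (hW : IsW1 p W x y z α a₁ a₂ a₃ a₄) (hp : p.Prime) :
    IsPTower p [y, x, α, z, α ^ p, a₁, a₂, a₃, a₄] := by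
  have hnormal_of_supset {T : Set W} (hT : {z, a₁, a₂, a₃, a₄} ⊆ T) :=
    hW.closure_normal_of_supset hp hT
  have hnormal_of_subset {T : Set W} (hT : T ⊆ {α ^ p, a₁, a₂, a₃, a₄}) : (closure T).Normal :=
    normal_of_le_center ((closure_mono hT).trans hW.closure_le_center)
  obtain ⟨-, -, -, -, -, -, -, -, hx, hy, hz, h₁, h₂, h₃, h₄, hα, -⟩ := hW
  simp only [IsPTower, List.setOf_mem_cons, List.not_mem_nil, Set.ofPred_false, insert_empty_eq]
  refine ⟨hnormal_of_supset (by simp [Set.insert_subset_iff]), hy ▸ one_mem _,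
    hnormal_of_supset (by simp [Set.insert_subset_iff]), hx ▸ one_mem _,
    hnormal_of_supset (by simp [Set.insert_subset_iff]), subset_closure (by simp),
    hnormal_of_subset subset_rfl, hz ▸ one_mem _,
    hnormal_of_subset (Set.subset_insert _ _), ?_,
    hnormal_of_subset (by simp [Set.insert_subset_iff]), h₁ ▸ one_mem _,
    hnormal_of_subset (by simp [Set.insert_subset_iff]), h₂ ▸ one_mem _,
    hnormal_of_subset (by simp), h₃ ▸ one_mem _,
    closure_empty (G := W) ▸ inferInstance, h₄ ▸ one_mem _, trivial⟩
  rw [← pow_mul, ← sq, hα]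
  exact one_mem _

theorem closure_tower_eq_top (hW : IsW1 p W x y z α a₁ a₂ a₃ a₄) :
    closure {y, x, α, z, α ^ p, a₁, a₂, a₃, a₄} = ⊤ := by
  rw [eq_top_iff, ← hW.closure_eq_top]
  exact closure_mono (by simp [Set.insert_subset_iff])

theorem dvd_of_pow_mem_closure_tail (hW : IsW1 p W x y z α a₁ a₂ a₃ a₄) (hp : p.Prime)
    (l₁ : List W) {g : W} {l : List W} (hl : l₁ ++ g :: l = [y, x, α, z, α ^ p, a₁, a₂, a₃, a₄])
    {k : ℕ} (hk : g ^ k ∈ closure {h | h ∈ l}) : p ∣ k := by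
  have := hW.finite hp
  have hcard : Nat.card W = p ^ 9 := hW.2.1
  refine (hl ▸ hW.isPTower hp).dvd_of_pow_mem hp l₁ ?_ hk
  simp only [hl, List.setOf_mem_cons, List.not_mem_nil, Set.ofPred_false, insert_empty_eq,
    hW.closure_tower_eq_top, card_top, hcard, List.length_cons, List.length_nil]

theorem dvd_of_z_pow_mem (hW : IsW1 p W x y z α a₁ a₂ a₃ a₄) (hp : p.Prime) {m : ℕ}
    (hm : z ^ m ∈ closure {α ^ p, a₁, a₂, a₃, a₄}) : p ∣ m :=
  hW.dvd_of_pow_mem_closure_tail hp [y, x, α] rfl (by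
    simpa only [List.setOf_mem_cons, List.not_mem_nil, Set.ofPred_false, insert_empty_eq] using hm)

theorem dvd_of_a₁_pow_mul_a₃_pow_eq_one (hW : IsW1 p W x y z α a₁ a₂ a₃ a₄) (hp : p.Prime) {k l : ℕ}
    (h : a₁ ^ k * a₃ ^ l = 1) : p ∣ k ∧ p ∣ l := by
  have hdvd := hW.dvd_of_pow_mem_closure_tail hp
  obtain ⟨-, -, -, -, -, -, -, -, -, -, -, h₁, -⟩ := hW
  have hk : p ∣ k := by
    refine hdvd [y, x, α, z, α ^ p] rfl ?_
    rw [eq_inv_of_mul_eq_one_left h]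
    exact inv_mem (pow_mem (subset_closure (by simp)) l)
  obtain ⟨c, rfl⟩ := hk
  rw [pow_mul, h₁, one_pow, one_mul] at h
  exact ⟨dvd_mul_right p c, hdvd [y, x, α, z, α ^ p, a₁, a₂] rfl (h ▸ one_mem _)⟩

theorem closure_le_comap_center (hW : IsW1 p W x y z α a₁ a₂ a₃ a₄)
    [(closure {α ^ p, a₁, a₂, a₃, a₄}).Normal] :
    closure {α, z, α ^ p, a₁, a₂, a₃, a₄} ≤
      (center (W ⧸ closure {α ^ p, a₁, a₂, a₃, a₄})).comap (QuotientGroup.mk' _) := by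
  set A := closure {α ^ p, a₁, a₂, a₃, a₄}
  have hgen := closure_image_eq_top (QuotientGroup.mk'_surjective A) hW.closure_eq_top
  obtain ⟨-, -, -, hxz, hyz, hxα, hyα, hzα, -⟩ := hW
  have hA {c : W} (hc : c ∈ ({a₁, a₂, a₃, a₄} : Set W)) : c ∈ A := subset_closure (.inr hc)
  have hcomm {s t : W} (h : pcomm s t ∈ A) : (s : W ⧸ A) * t = t * s :=
    (commute_mk_of_pcomm_mem h).eq
  rw [closure_le]
  rintro _ (rfl | rfl | hc)
  · refine mem_center_of_forall_commute hgen ?_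
    rintro _ ⟨s, (rfl | rfl | rfl), rfl⟩
    exacts [hcomm (hxα ▸ hA (by simp)), hcomm (hyα ▸ hA (by simp)), rfl]
  · refine mem_center_of_forall_commute hgen ?_
    rintro _ ⟨s, (rfl | rfl | rfl), rfl⟩
    exacts [hcomm (hxz ▸ hA (by simp)), hcomm (hyz ▸ hA (by simp)),
      hcomm (by rw [pcomm_swap, hzα, inv_one]; exact one_mem _)]
  · rw [SetLike.mem_coe, mem_comap, QuotientGroup.mk'_apply,
      (QuotientGroup.eq_one_iff _).2 (subset_closure hc)]
    exact one_mem _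

theorem center_le_closure (hW : IsW1 p W x y z α a₁ a₂ a₃ a₄) (hp : p.Prime) :
    center W ≤ closure {α, z, α ^ p, a₁, a₂, a₃, a₄} := by
  have := hW.finite hp
  set A := closure {α ^ p, a₁, a₂, a₃, a₄}
  have : A.Normal := normal_of_le_center hW.closure_le_center
  have : (closure {x, α, z, α ^ p, a₁, a₂, a₃, a₄}).Normal :=
    hW.closure_normal_of_supset hp (by simp [Set.insert_subset_iff])
  have : (closure {α, z, α ^ p, a₁, a₂, a₃, a₄}).Normal :=
    hW.closure_normal_of_supset hp (by simp [Set.insert_subset_iff])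
  have htop := hW.closure_tower_eq_top
  have hcenterQ := hW.closure_le_comap_center
  have hdvd : ∀ {m : ℕ}, z ^ m ∈ A → p ∣ m := hW.dvd_of_z_pow_mem hp
  obtain ⟨-, -, hxy, -, -, -, -, -, hx, hy, -⟩ := hW
  intro g hg
  obtain ⟨h, hh, n, rfl⟩ := exists_mul_pow_eq_of_mem_closure_insert (htop ▸ mem_top g)
  obtain ⟨b, hb, m, rfl⟩ := exists_mul_pow_eq_of_mem_closure_insert hh
  have hrel : (x : W ⧸ A) * y = y * x * z := by
    simpa [hxy] using congrArg ((↑) : W → W ⧸ A) (mul_eq_mul_mul_pcomm x y)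
  have hcent : (x : W ⧸ A) ^ m * (y : W ⧸ A) ^ n ∈ center _ := by
    have hg' := (QuotientGroup.mk' A).map_mem_center (QuotientGroup.mk'_surjective A) hg
    rw [QuotientGroup.mk'_apply, mul_assoc, QuotientGroup.mk_mul] at hg'
    have := mul_mem (inv_mem (mem_comap.1 (hcenterQ hb))) hg'
    rwa [QuotientGroup.mk'_apply, inv_mul_cancel_left, QuotientGroup.mk_mul, QuotientGroup.mk_pow,
      QuotientGroup.mk_pow] at this
  have hzQ := mem_comap.1 (hcenterQ (subset_closure (by simp : z ∈ _)))
  obtain ⟨hzm, hzn⟩ := pow_eq_one_of_pow_mul_pow_mem_center hrel hzQ hcent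
  obtain ⟨c, rfl⟩ : p ∣ m := hdvd ((QuotientGroup.eq_one_iff _).1 (by rwa [QuotientGroup.mk_pow]))
  obtain ⟨d, rfl⟩ : p ∣ n := hdvd ((QuotientGroup.eq_one_iff _).1 (by rwa [QuotientGroup.mk_pow]))
  rwa [pow_mul, pow_mul, hx, hy, one_pow, one_pow, mul_one, mul_one]

theorem a₁_pow_mul_a₃_pow_eq_one_of_mem_center (hW : IsW1 p W x y z α a₁ a₂ a₃ a₄) {c : W}
    (hc : c ∈ center W) {k l : ℕ} (hg : c * z ^ k * α ^ l ∈ center W) : a₁ ^ k * a₃ ^ l = 1 := by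
  have h₁ := hW.subset_center (by simp : a₁ ∈ _)
  have h₃ := hW.subset_center (by simp : a₃ ∈ _)
  obtain ⟨-, -, -, hxz, -, hxα, -⟩ := hW
  have hzk := mul_pow_eq_of_mul_eq (hxz ▸ mul_eq_mul_mul_pcomm x z) (mem_center_iff.1 h₁ z) k
  have hαl := mul_pow_eq_of_mul_eq (hxα ▸ mul_eq_mul_mul_pcomm x α) (mem_center_iff.1 h₃ α) l
  have hswap := mem_center_iff.1 (pow_mem h₁ k) (α ^ l)
  have key : x * (c * z ^ k * α ^ l) = c * z ^ k * α ^ l * x * (a₁ ^ k * a₃ ^ l) :=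
    calc x * (c * z ^ k * α ^ l) = c * (x * z ^ k) * α ^ l := by
          rw [← mul_assoc, ← mul_assoc, mem_center_iff.1 hc x, mul_assoc c]
      _ = c * z ^ k * (x * α ^ l) * a₁ ^ k := by
          rw [hzk]; simp only [mul_assoc, hswap]
      _ = c * z ^ k * α ^ l * x * (a₁ ^ k * a₃ ^ l) := by
          rw [hαl]; simp only [mul_assoc, mem_center_iff.1 (pow_mem h₁ k) (a₃ ^ l)]
  rwa [mem_center_iff.1 hg x, left_eq_mul] at key

theorem center_le (hW : IsW1 p W x y z α a₁ a₂ a₃ a₄) (hp : p.Prime) :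
    center W ≤ closure {α ^ p, a₁, a₂, a₃, a₄} := by
  have := hW.finite hp
  have : (closure {α ^ p, a₁, a₂, a₃, a₄}).Normal := normal_of_le_center hW.closure_le_center
  have : (closure {z, α ^ p, a₁, a₂, a₃, a₄}).Normal :=
    hW.closure_normal_of_supset hp (by simp [Set.insert_subset_iff])
  intro g hg
  obtain ⟨b, hb, l, rfl⟩ := exists_mul_pow_eq_of_mem_closure_insert (hW.center_le_closure hp hg)
  obtain ⟨c, hc, k, rfl⟩ := exists_mul_pow_eq_of_mem_closure_insert hb
  obtain ⟨hk, hl⟩ := hW.dvd_of_a₁_pow_mul_a₃_pow_eq_one hp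
    (hW.a₁_pow_mul_a₃_pow_eq_one_of_mem_center (hW.closure_le_center hc) hg)
  obtain ⟨-, -, -, -, -, -, -, -, -, -, hz, -⟩ := hW
  obtain ⟨i, rfl⟩ := hk
  obtain ⟨j, rfl⟩ := hl
  rw [pow_mul, pow_mul, hz, one_pow, mul_one]
  exact mul_mem hc (pow_mem (subset_closure (by simp)) j)

end IsW1

theorem stmt_10_general (p : ℕ) (hp : p.Prime)
    (W : Type) [Group W] (x y z α a₁ a₂ a₃ a₄ : W)
    (hW : IsW1 p W x y z α a₁ a₂ a₃ a₄) :
    commutator W = Subgroup.closure {z, a₁, a₂, a₃, a₄} ∧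
    Subgroup.center W = Subgroup.closure {α ^ p, a₁, a₂, a₃, a₄} :=
  ⟨hW.commutator_eq hp, le_antisymm (hW.center_le hp) hW.closure_le_center⟩

/-- The commutator subgroup of `W₁` is generated by `{z, α₁, α₂, α₃, α₄}` and the center of
`W₁` is generated by `{α^p, α₁, α₂, α₃, α₄}`. -/
theorem stmt_10 (p : ℕ) (hp : p.Prime) (hodd : Odd p)
    (W : Type) [Group W] (x y z α a₁ a₂ a₃ a₄ : W)
    (hW : IsW1 p W x y z α a₁ a₂ a₃ a₄) :
    commutator W = Subgroup.closure {z, a₁, a₂, a₃, a₄} ∧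
    Subgroup.center W = Subgroup.closure {α ^ p, a₁, a₂, a₃, a₄} :=
  stmt_10_general p hp W x y z α a₁ a₂ a₃ a₄ hW
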